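/- Let t > 0 and let f : ℝ → ℝ be twice continuously differentiable with bounded second derivative. Then lim_{n→∞} n · ( ∫ f(x) dΓ(n, n/t)(x) − f(t) ) = (t²/2) f''(t). -/

import Mathlib

/-!
Expand `f` to second order around `t`: `f x = f t + f' t (x - t) + f'' t (x - t)² / 2 + R x`.
Under `Γ(n, n/t)` the linear term integrates to `0` and the quadratic one to `f'' t · t² / (2n)`.
Continuity of `f''` at `t` controls `R` near `t`, boundedness of `f''` controls it far from `t`,
so `|R x| ≤ ε (x - t)² + K_ε (x - t)⁴` for every `ε > 0`; as the fourth central moment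
`3 (n + 2) t⁴ / n³` is `o(1/n)`, this gives `n ∫ R → 0`.
-/

open MeasureTheory ProbabilityTheory Filter Real Set Topology

lemma abs_pow_le_one_add_abs_pow (y : ℝ) {k m : ℕ} (hkm : k ≤ m) : |y| ^ k ≤ 1 + |y| ^ m := by
  rcases le_total |y| 1 with hy | hy
  · linarith [pow_le_one₀ (abs_nonneg y) hy (n := k), pow_nonneg (abs_nonneg y) m]
  · linarith [pow_le_pow_right₀ hy hkm]

lemma integrable_pow_of_le {α : Type*} [MeasurableSpace α] {μ : Measure α} [IsFiniteMeasure μ]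
    {g : α → ℝ} (hg : AEStronglyMeasurable g μ) {k m : ℕ} (hkm : k ≤ m)
    (hm : Integrable (fun x => g x ^ m) μ) : Integrable (fun x => g x ^ k) μ :=
  ((integrable_const 1).add hm.norm).mono' (hg.pow k) <| .of_forall fun x => by
    simpa only [norm_pow, Real.norm_eq_abs, Pi.add_apply] using abs_pow_le_one_add_abs_pow (g x) hkm

lemma abs_sub_sub_mul_le_of_hasDerivAt {g g' : ℝ → ℝ} {t x c ε : ℝ}
    (hg : ∀ y ∈ uIcc t x, HasDerivAt g (g' y) y) (h : ∀ y ∈ uIcc t x, |g' y - c| ≤ ε) :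
    |g x - g t - c * (x - t)| ≤ ε * |x - t| := by
  have hmvt := (convex_uIcc t x).norm_image_sub_le_of_norm_hasDerivWithin_le
    (f := fun y => g y - c * y)
    (fun y hy => ((hg y hy).sub ((hasDerivAt_id' y).const_mul c)).hasDerivWithinAt)
    (fun y hy => by simpa using h y hy) left_mem_uIcc right_mem_uIcc
  simp only [Real.norm_eq_abs] at hmvt
  convert hmvt using 2
  ring

section Taylor

variable {f : ℝ → ℝ} {t x ε : ℝ}

noncomputable def taylorRemainderTwo (f : ℝ → ℝ) (t x : ℝ) : ℝ :=
  f x - f t - deriv f t * (x - t) - iteratedDeriv 2 f t * (x - t) ^ 2 / 2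

lemma abs_taylorRemainderTwo_le (hf : ContDiff ℝ 2 f)
    (h : ∀ y ∈ uIcc t x, |iteratedDeriv 2 f y - iteratedDeriv 2 f t| ≤ ε) :
    |taylorRemainderTwo f t x| ≤ ε * (x - t) ^ 2 := by
  rw [taylorRemainderTwo]
  set c := iteratedDeriv 2 f t
  have hε : 0 ≤ ε := (abs_nonneg _).trans (h t left_mem_uIcc)
  have hf' : ∀ y, HasDerivAt f (deriv f y) y := fun y =>
    ((hf.differentiable two_ne_zero) y).hasDerivAt
  have hf'' : ∀ y, HasDerivAt (deriv f) (iteratedDeriv 2 f y) y := fun y => by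
    rw [iteratedDeriv_succ, iteratedDeriv_one]
    exact ((hf.iterate_deriv' 1 1).differentiable one_ne_zero y).hasDerivAt
  have hg : ∀ y, HasDerivAt (fun y => f y - c * (y - t) ^ 2 / 2) (deriv f y - c * (y - t)) y := by
    intro y
    have hq : HasDerivAt (fun y => c * (y - t) ^ 2 / 2) (c * (y - t)) y := by
      refine ((((hasDerivAt_id' y).sub_const t).fun_pow 2).const_mul c).div_const 2
        |>.congr_deriv ?_
      ring
    exact (hf' y).sub hq
  have hg' : ∀ y ∈ uIcc t x, |deriv f y - c * (y - t) - deriv f t| ≤ ε * |x - t| := by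
    intro y hy
    calc |deriv f y - c * (y - t) - deriv f t| = |deriv f y - deriv f t - c * (y - t)| := by
          congr 1; ring
      _ ≤ ε * |y - t| := abs_sub_sub_mul_le_of_hasDerivAt (fun z _ => hf'' z)
          fun z hz => h z (uIcc_subset_uIcc_left hy hz)
      _ ≤ ε * |x - t| := mul_le_mul_of_nonneg_left (abs_sub_left_of_mem_uIcc hy) hε
  calc |f x - f t - deriv f t * (x - t) - c * (x - t) ^ 2 / 2|
      = |(f x - c * (x - t) ^ 2 / 2) - (f t - c * (t - t) ^ 2 / 2) - deriv f t * (x - t)| := by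
        congr 1; ring
    _ ≤ ε * |x - t| * |x - t| := abs_sub_sub_mul_le_of_hasDerivAt (fun y _ => hg y) hg'
    _ = ε * (x - t) ^ 2 := by rw [mul_assoc, ← abs_mul, ← sq, abs_sq]

lemma exists_abs_taylorRemainderTwo_le (hf : ContDiff ℝ 2 f)
    (hf_bdd : ∃ M, ∀ x, |iteratedDeriv 2 f x| ≤ M) (t : ℝ) (hε : 0 < ε) :
    ∃ K, ∀ x, |taylorRemainderTwo f t x| ≤ ε * (x - t) ^ 2 + K * (x - t) ^ 4 := by
  obtain ⟨M, hM⟩ := hf_bdd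
  have hM0 : 0 ≤ M := (abs_nonneg _).trans (hM t)
  obtain ⟨η, hη, hclose⟩ := Metric.continuousAt_iff.mp
    ((hf.continuous_iteratedDeriv 2 le_rfl).continuousAt (x := t)) ε hε
  refine ⟨2 * M / η ^ 2, fun x => ?_⟩
  rcases lt_or_ge |x - t| η with hx | hx
  · have hnear := abs_taylorRemainderTwo_le (x := x) hf fun y hy =>
      (hclose ((abs_sub_left_of_mem_uIcc hy).trans_lt hx)).le
    have : 0 ≤ 2 * M / η ^ 2 * (x - t) ^ 4 := by positivity
    linarith
  · have hfar := abs_taylorRemainderTwo_le (ε := 2 * M) (x := x) hf fun y _ =>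
      (abs_sub _ _).trans (by linarith [hM y, hM t])
    have hη2 : η ^ 2 ≤ (x - t) ^ 2 := by simpa using pow_le_pow_left₀ hη.le hx 2
    have : 2 * M * (x - t) ^ 2 ≤ 2 * M / η ^ 2 * (x - t) ^ 4 := by
      rw [div_mul_eq_mul_div, le_div_iff₀ (by positivity)]
      nlinarith [mul_le_mul_of_nonneg_left hη2 (by positivity : 0 ≤ 2 * M * (x - t) ^ 2)]
    have : 0 ≤ ε * (x - t) ^ 2 := by positivity
    linarith

lemma continuous_taylorRemainderTwo (hf : ContDiff ℝ 2 f) (t : ℝ) :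
    Continuous (taylorRemainderTwo f t) := by
  have := hf.continuous
  unfold taylorRemainderTwo
  fun_prop

section Moments

variable {μ : Measure ℝ}

lemma integral_sub_eq_integral_taylorRemainderTwo_add [IsProbabilityMeasure μ] (hf : ContDiff ℝ 2 f)
    (hf_bdd : ∃ M, ∀ x, |iteratedDeriv 2 f x| ≤ M) (h4 : Integrable (fun x => (x - t) ^ 4) μ)
    (h1 : ∫ x, (x - t) ∂μ = 0) :
    ∫ x, f x ∂μ - f t =
      ∫ x, taylorRemainderTwo f t x ∂μ + iteratedDeriv 2 f t / 2 * ∫ x, (x - t) ^ 2 ∂μ := by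
  have hsub : AEStronglyMeasurable (fun x : ℝ => x - t) μ := by fun_prop
  have hint1 : Integrable (fun x => x - t) μ := by
    simpa using integrable_pow_of_le hsub (by norm_num : 1 ≤ 4) h4
  have hint2 := integrable_pow_of_le hsub (by norm_num : 2 ≤ 4) h4
  obtain ⟨K, hK⟩ := exists_abs_taylorRemainderTwo_le hf hf_bdd t one_pos
  have hR : Integrable (taylorRemainderTwo f t) μ :=
    ((hint2.const_mul 1).add (h4.const_mul K)).mono'
      (continuous_taylorRemainderTwo hf t).aestronglyMeasurable (.of_forall hK)
  have hlin : Integrable (fun x => f t + deriv f t * (x - t)) μ :=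
    (integrable_const _).fun_add (hint1.const_mul _)
  have hf_eq : ∀ x, f x = taylorRemainderTwo f t x +
      ((f t + deriv f t * (x - t)) + iteratedDeriv 2 f t / 2 * (x - t) ^ 2) := fun x => by
    unfold taylorRemainderTwo; ring
  rw [integral_congr_ae (.of_forall hf_eq), integral_add hR (hlin.fun_add (hint2.const_mul _)),
    integral_add hlin (hint2.const_mul _),
    integral_add (integrable_const _) (hint1.const_mul _), integral_const_mul, integral_const_mul,
    integral_const, h1, probReal_univ, one_smul, mul_zero, add_zero]
  ring

lemma abs_mul_integral_le_of_abs_le {g : ℝ → ℝ} {δ K : ℝ} (s : ℝ)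
    (hg : ∀ x, |g x| ≤ δ * (x - t) ^ 2 + K * (x - t) ^ 4)
    (h2 : Integrable (fun x => (x - t) ^ 2) μ) (h4 : Integrable (fun x => (x - t) ^ 4) μ) :
    |s * ∫ x, g x ∂μ| ≤ δ * |s * ∫ x, (x - t) ^ 2 ∂μ| + K * |s * ∫ x, (x - t) ^ 4 ∂μ| := by
  have hint := norm_integral_le_of_norm_le (f := g) ((h2.const_mul δ).fun_add (h4.const_mul K))
    (.of_forall hg)
  rw [integral_add (h2.const_mul δ) (h4.const_mul K), integral_const_mul,
    integral_const_mul] at hint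
  have h2_nonneg : 0 ≤ ∫ x, (x - t) ^ 2 ∂μ := integral_nonneg fun x => by positivity
  have h4_nonneg : 0 ≤ ∫ x, (x - t) ^ 4 ∂μ := integral_nonneg fun x => by positivity
  rw [abs_mul, abs_mul s, abs_mul s, abs_of_nonneg h2_nonneg, abs_of_nonneg h4_nonneg]
  calc |s| * |∫ x, g x ∂μ| ≤ |s| * (δ * ∫ x, (x - t) ^ 2 ∂μ + K * ∫ x, (x - t) ^ 4 ∂μ) :=
        mul_le_mul_of_nonneg_left hint (abs_nonneg s)
    _ = δ * (|s| * ∫ x, (x - t) ^ 2 ∂μ) + K * (|s| * ∫ x, (x - t) ^ 4 ∂μ) := by ring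

end Moments

theorem tendsto_mul_integral_sub_of_centralMoments {ι : Type*} {l : Filter ι}
    {μ : ι → Measure ℝ} {s : ι → ℝ} {v : ℝ} (hf : ContDiff ℝ 2 f)
    (hf_bdd : ∃ M, ∀ x, |iteratedDeriv 2 f x| ≤ M)
    (hμ : ∀ᶠ i in l, IsProbabilityMeasure (μ i))
    (h4 : ∀ᶠ i in l, Integrable (fun x => (x - t) ^ 4) (μ i))
    (h1 : ∀ᶠ i in l, ∫ x, (x - t) ∂μ i = 0)
    (hvar : Tendsto (fun i => s i * ∫ x, (x - t) ^ 2 ∂μ i) l (𝓝 v))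
    (hfourth : Tendsto (fun i => s i * ∫ x, (x - t) ^ 4 ∂μ i) l (𝓝 0)) :
    Tendsto (fun i => s i * (∫ x, f x ∂μ i - f t)) l (𝓝 (v / 2 * iteratedDeriv 2 f t)) := by
  have hR : Tendsto (fun i => s i * ∫ x, taylorRemainderTwo f t x ∂μ i) l (𝓝 0) := by
    refine Metric.tendsto_nhds.mpr fun ε hε => ?_
    set δ := ε / (2 * (|v| + 1))
    obtain ⟨K, hK⟩ := exists_abs_taylorRemainderTwo_le hf hf_bdd t (by positivity : 0 < δ)
    have hv : ∀ᶠ i in l, |s i * ∫ x, (x - t) ^ 2 ∂μ i| < |v| + 1 :=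
      hvar.abs.eventually (gt_mem_nhds (lt_add_one _))
    have hK4 : ∀ᶠ i in l, K * |s i * ∫ x, (x - t) ^ 4 ∂μ i| < ε / 2 := by
      have := hfourth.abs.const_mul K
      rw [abs_zero, mul_zero] at this
      exact this.eventually (gt_mem_nhds (half_pos hε))
    filter_upwards [hμ, h4, hv, hK4] with i hμi h4i hvi hK4i
    have h2i := integrable_pow_of_le (by fun_prop) (by norm_num : 2 ≤ 4) h4i
    have hδ : δ * |s i * ∫ x, (x - t) ^ 2 ∂μ i| ≤ ε / 2 := by
      calc δ * |s i * ∫ x, (x - t) ^ 2 ∂μ i| ≤ δ * (|v| + 1) := by gcongr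
        _ = ε / 2 := by rw [div_mul_eq_mul_div, mul_div_mul_right _ _ (by positivity)]
    rw [Real.dist_0_eq_abs]
    linarith [abs_mul_integral_le_of_abs_le (s i) hK h2i h4i]
  have hdecomp : ∀ᶠ i in l, s i * ∫ x, taylorRemainderTwo f t x ∂μ i +
      iteratedDeriv 2 f t / 2 * (s i * ∫ x, (x - t) ^ 2 ∂μ i) = s i * (∫ x, f x ∂μ i - f t) := by
    filter_upwards [hμ, h4, h1] with i hμi h4i h1i
    rw [integral_sub_eq_integral_taylorRemainderTwo_add hf hf_bdd h4i h1i]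
    ring
  convert (hR.add (hvar.const_mul (iteratedDeriv 2 f t / 2))).congr' hdecomp using 2
  ring

end Taylor

lemma Real.Gamma_add_nat_eq_mul_prod {a : ℝ} (ha : 0 < a) (k : ℕ) :
    Gamma (a + k) = Gamma a * ∏ i ∈ Finset.range k, (a + i) := by
  induction k with
  | zero => simp
  | succ k ih =>
    rw [Nat.cast_succ, ← add_assoc, Gamma_add_one (by positivity), ih, Finset.prod_range_succ]
    ring

namespace ProbabilityTheory

variable {a r : ℝ}

lemma measurable_gammaPDF : Measurable (gammaPDF a r) :=
  (measurable_gammaPDFReal a r).ennreal_ofReal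

lemma gammaPDFReal_mul_eq_indicator (g : ℝ → ℝ) :
    (fun x => gammaPDFReal a r x * g x) = (Ici 0).indicator fun x => gammaPDFReal a r x * g x := by
  ext x
  by_cases hx : 0 ≤ x
  · simp [hx]
  · simp [hx, gammaPDFReal]

lemma integral_gammaMeasure (ha : 0 < a) (hr : 0 < r) (g : ℝ → ℝ) :
    ∫ x, g x ∂gammaMeasure a r = ∫ x in Ioi 0, gammaPDFReal a r x * g x := by
  rw [gammaMeasure, integral_withDensity_eq_integral_toReal_smul measurable_gammaPDF
      (ae_of_all _ fun _ => ENNReal.ofReal_lt_top)]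
  simp only [gammaPDF, ENNReal.toReal_ofReal (gammaPDFReal_nonneg ha hr _), smul_eq_mul]
  conv_lhs => rw [gammaPDFReal_mul_eq_indicator]
  rw [integral_indicator measurableSet_Ici, integral_Ici_eq_integral_Ioi]

lemma integrable_gammaMeasure_iff (ha : 0 < a) (hr : 0 < r) (g : ℝ → ℝ) :
    Integrable g (gammaMeasure a r) ↔ IntegrableOn (fun x => gammaPDFReal a r x * g x) (Ioi 0) := by
  rw [gammaMeasure, integrable_withDensity_iff_integrable_smul' measurable_gammaPDF
      (ae_of_all _ fun _ => ENNReal.ofReal_lt_top)]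
  simp only [gammaPDF, ENNReal.toReal_ofReal (gammaPDFReal_nonneg ha hr _), smul_eq_mul]
  conv_lhs => rw [gammaPDFReal_mul_eq_indicator]
  rw [integrable_indicator_iff measurableSet_Ici, integrableOn_Ici_iff_integrableOn_Ioi]

lemma gammaPDFReal_mul_pow_eqOn (k : ℕ) :
    EqOn (fun x => gammaPDFReal a r x * x ^ k)
      (fun x => r ^ a / Gamma a * (x ^ (a + k - 1) * exp (-(r * x)))) (Ioi 0) := by
  intro x (hx : 0 < x)
  simp only [gammaPDFReal, if_pos hx.le]
  rw [← rpow_natCast, add_sub_right_comm, rpow_add hx]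
  ring

lemma integrable_pow_gammaMeasure (ha : 0 < a) (hr : 0 < r) (k : ℕ) :
    Integrable (fun x => x ^ k) (gammaMeasure a r) := by
  rw [integrable_gammaMeasure_iff ha hr]
  refine IntegrableOn.congr_fun ?_ (gammaPDFReal_mul_pow_eqOn k).symm measurableSet_Ioi
  have h := integrableOn_rpow_mul_exp_neg_mul_rpow (by linarith : (-1:ℝ) < a + k - 1)
    zero_lt_one hr
  simp only [rpow_one, neg_mul] at h
  exact h.const_mul _

lemma integral_pow_gammaMeasure (ha : 0 < a) (hr : 0 < r) (k : ℕ) :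
    ∫ x, x ^ k ∂gammaMeasure a r = Gamma (a + k) / (Gamma a * r ^ k) := by
  rw [integral_gammaMeasure ha hr, setIntegral_congr_fun measurableSet_Ioi
    (gammaPDFReal_mul_pow_eqOn k), integral_const_mul,
    integral_rpow_mul_exp_neg_mul_Ioi (by positivity) hr, div_rpow zero_le_one hr.le, one_rpow,
    rpow_add hr, rpow_natCast]
  have := (Gamma_pos_of_pos ha).ne'
  field_simp

lemma integral_pow_gammaMeasure_eq_prod (ha : 0 < a) (hr : 0 < r) (k : ℕ) :
    ∫ x, x ^ k ∂gammaMeasure a r = (∏ i ∈ Finset.range k, (a + i)) / r ^ k := by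
  rw [integral_pow_gammaMeasure ha hr, Real.Gamma_add_nat_eq_mul_prod ha,
    mul_div_mul_left _ _ (Gamma_pos_of_pos ha).ne']

lemma integrable_sub_pow_gammaMeasure (ha : 0 < a) (hr : 0 < r) (t : ℝ) (k : ℕ) :
    Integrable (fun x => (x - t) ^ k) (gammaMeasure a r) := by
  simp_rw [sub_eq_add_neg, add_pow]
  exact integrable_finsetSum _ fun i _ =>
    ((integrable_pow_gammaMeasure ha hr i).mul_const _).mul_const _

lemma integral_sub_pow_gammaMeasure (ha : 0 < a) (hr : 0 < r) (t : ℝ) (k : ℕ) :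
    ∫ x, (x - t) ^ k ∂gammaMeasure a r = ∑ i ∈ Finset.range (k + 1),
      (∏ j ∈ Finset.range i, (a + j)) / r ^ i * (-t) ^ (k - i) * k.choose i := by
  simp_rw [sub_eq_add_neg, add_pow]
  rw [integral_finsetSum _ fun i _ =>
    ((integrable_pow_gammaMeasure ha hr i).mul_const _).mul_const _]
  simp_rw [integral_mul_const, integral_pow_gammaMeasure_eq_prod ha hr]

variable {m : ℝ}

lemma integral_sub_mean_gammaMeasure (ha : 0 < a) (hm : 0 < m) :
    ∫ x, (x - m) ∂gammaMeasure a (a / m) = 0 := by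
  simpa [Finset.sum_range_succ, ha.ne'] using integral_sub_pow_gammaMeasure ha (div_pos ha hm) m 1

lemma integral_sub_mean_sq_gammaMeasure (ha : 0 < a) (hm : 0 < m) :
    ∫ x, (x - m) ^ 2 ∂gammaMeasure a (a / m) = m ^ 2 / a := by
  rw [integral_sub_pow_gammaMeasure ha (div_pos ha hm)]
  simp only [Finset.sum_range_succ, Finset.prod_range_succ, Finset.sum_range_zero,
    Finset.prod_range_zero, Nat.choose, Nat.reduceSub]
  field_simp
  ring

lemma integral_sub_mean_pow_four_gammaMeasure (ha : 0 < a) (hm : 0 < m) :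
    ∫ x, (x - m) ^ 4 ∂gammaMeasure a (a / m) = 3 * (a + 2) * m ^ 4 / a ^ 3 := by
  rw [integral_sub_pow_gammaMeasure ha (div_pos ha hm)]
  simp only [Finset.sum_range_succ, Finset.prod_range_succ, Finset.sum_range_zero,
    Finset.prod_range_zero, Nat.choose, Nat.reduceSub]
  field_simp
  ring

lemma tendsto_natCast_mul_integral_sub_sq_gammaMeasure (hm : 0 < m) :
    Tendsto (fun n : ℕ => (n : ℝ) * ∫ x, (x - m) ^ 2 ∂gammaMeasure n (n / m)) atTop
      (𝓝 (m ^ 2)) := by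
  refine tendsto_const_nhds.congr' ?_
  filter_upwards [eventually_gt_atTop 0] with n hn
  rw [integral_sub_mean_sq_gammaMeasure (Nat.cast_pos.mpr hn) hm]
  field_simp

lemma tendsto_natCast_mul_integral_sub_pow_four_gammaMeasure (hm : 0 < m) :
    Tendsto (fun n : ℕ => (n : ℝ) * ∫ x, (x - m) ^ 4 ∂gammaMeasure n (n / m)) atTop (𝓝 0) := by
  have hlim : Tendsto (fun n : ℕ => 3 * m ^ 4 * ((n : ℝ)⁻¹ + 2 * (n : ℝ)⁻¹ ^ 2)) atTop (𝓝 0) := by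
    have := (tendsto_inv_atTop_nhds_zero_nat.add
      ((tendsto_inv_atTop_nhds_zero_nat.pow 2).const_mul 2)).const_mul (3 * m ^ 4)
    rwa [zero_pow two_ne_zero, mul_zero, add_zero, mul_zero] at this
  refine hlim.congr' ?_
  filter_upwards [eventually_gt_atTop 0] with n hn
  rw [integral_sub_mean_pow_four_gammaMeasure (Nat.cast_pos.mpr hn) hm]
  field_simp

end ProbabilityTheory

/-- First-order randomisation error: for `t > 0` and `f` of class `C²` with bounded second
derivative, `n (∫ f dΓ(n,n/t) - f(t)) → (t²/2) f''(t)` as `n → ∞`. -/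
theorem gamma_randomisation_first_order (t : ℝ) (ht : 0 < t) (f : ℝ → ℝ)
    (hf : ContDiff ℝ 2 f)
    (hf_bdd : ∃ M : ℝ, ∀ x : ℝ, |iteratedDeriv 2 f x| ≤ M) :
    Tendsto (fun n : ℕ =>
        (n : ℝ) * ((∫ x, f x ∂(gammaMeasure n ((n : ℝ) / t))) - f t))
      atTop (nhds (t ^ 2 / 2 * iteratedDeriv 2 f t)) := by
  have hpos : ∀ᶠ n : ℕ in atTop, (0 : ℝ) < n :=
    (eventually_gt_atTop 0).mono fun n hn => Nat.cast_pos.mpr hn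
  refine tendsto_mul_integral_sub_of_centralMoments hf hf_bdd ?_ ?_ ?_
    (tendsto_natCast_mul_integral_sub_sq_gammaMeasure ht)
    (tendsto_natCast_mul_integral_sub_pow_four_gammaMeasure ht)
  · filter_upwards [hpos] with n hn using isProbabilityMeasure_gammaMeasure hn (by positivity)
  · filter_upwards [hpos] with n hn using integrable_sub_pow_gammaMeasure hn (by positivity) t 4
  · filter_upwards [hpos] with n hn using integral_sub_mean_gammaMeasure hn ht
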